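/- Let L ≥ 1, m_ℓ ≥ 1 for ℓ ∈ [L], M := ∑_ℓ m_ℓ, U > 0, ε > 0, and let T be the ⌈2/ε⌉-th largest value of the multiset {U·m_1, …, U·m_L} (with T := 0 if ⌈2/ε⌉ > L). Then the minimum of the worst-case error functional E^{(1)} over all admissible clipping strategies equals (1/M)·(∑_{ℓ≤L} max{(U·m_ℓ − T)/2, 0} + T/ε). -/

import Mathlib

/-!
Write `c ℓ = U m_ℓ` and `S = max_ℓ ∑_j (b_j - a_j)`. Since `max (a, U - b) ≥ (U - (b - a)) / 2`,
user `ℓ` loses at least `max ((c ℓ - S) / 2, 0)` to clipping, so `M · E^(1) ≥ g S` with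
`g x = ∑_ℓ max ((c ℓ - x) / 2, 0) + x / ε`. The function `g` is convex and piecewise linear with
slope `1/ε - #{ℓ | x < c ℓ} / 2`, hence minimal on `[0, ∞)` at the `⌈2/ε⌉`-th largest
capacity `T`. Equality is attained by the intervals centred at `U/2` of length `min (c ℓ, T) / m_ℓ`.
-/

open Finset

noncomputable def kthLargest {L : ℕ} (v : Fin L → ℝ) (k : ℕ) : ℝ :=
  (((Finset.univ.val.map v).sort (· ≤ ·)).reverse).getD (k - 1) 0

/-- An admissible clipping strategy: `0 ≤ a ℓ j ≤ b ℓ j ≤ U` for every user `ℓ`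
and sample index `j`. -/
def Admissible {L : ℕ} (m : Fin L → ℕ) (U : ℝ)
    (a b : (ℓ : Fin L) → Fin (m ℓ) → ℝ) : Prop :=
  ∀ ℓ j, 0 ≤ a ℓ j ∧ a ℓ j ≤ b ℓ j ∧ b ℓ j ≤ U

/-- The worst-case error functional `E^(1)` of a clipping strategy (dimension `d = 1`). -/
noncomputable def E1 {L : ℕ} (m : Fin L → ℕ) (U ε : ℝ)
    (a b : (ℓ : Fin L) → Fin (m ℓ) → ℝ) : ℝ :=
  (1 / ∑ ℓ, (m ℓ : ℝ)) *
    ((∑ ℓ, ∑ j, max (a ℓ j) (U - b ℓ j)) +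
      (1 / ε) * sSup (Set.range fun ℓ => ∑ j, (b ℓ j - a ℓ j)))

namespace List

variable {α : Type*} [LinearOrder α] {t d : List α} {x : α}

theorem countP_lt_le_of_pairwise_ge (h : (t ++ x :: d).Pairwise (· ≥ ·)) :
    (t ++ x :: d).countP (fun y => decide (x < y)) ≤ t.length := by
  obtain ⟨-, hcons, -⟩ := pairwise_append.1 h
  have hd := (pairwise_cons.1 hcons).1
  have hxd : (x :: d).countP (fun y => decide (x < y)) = 0 := by
    refine countP_eq_zero.2 fun y hy => ?_
    rcases mem_cons.1 hy with rfl | hy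
    · simp
    · simpa using hd y hy
  rw [countP_append, hxd, Nat.add_zero]
  exact countP_le_length

theorem length_lt_countP_le_of_pairwise_ge (h : (t ++ x :: d).Pairwise (· ≥ ·)) :
    t.length < (t ++ x :: d).countP (fun y => decide (x ≤ y)) := by
  obtain ⟨-, -, ht⟩ := pairwise_append.1 h
  have htx : t.countP (fun y => decide (x ≤ y)) = t.length :=
    countP_eq_length.2 fun y hy => by simpa using ht y hy x mem_cons_self
  rw [countP_append, htx, countP_cons_of_pos (by simp)]
  omega

end List

section KthLargest

variable {L : ℕ} (v : Fin L → ℝ)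

noncomputable def descList : List ℝ := ((univ.val.map v).sort (· ≤ ·)).reverse

theorem kthLargest_eq_getD (k : ℕ) : kthLargest v k = (descList v).getD (k - 1) 0 := rfl

theorem length_descList : (descList v).length = L := by
  simp [descList]

theorem pairwise_descList : (descList v).Pairwise (· ≥ ·) :=
  List.pairwise_reverse.2 (Multiset.pairwise_sort _ _)

theorem mem_descList {x : ℝ} : x ∈ descList v ↔ x ∈ Set.range v := by
  rw [descList, List.mem_reverse, ← Multiset.mem_coe, Multiset.sort_eq]
  simp

theorem countP_descList (p : ℝ → Prop) [DecidablePred p] :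
    (descList v).countP (fun x => decide (p x)) = #{ℓ | p (v ℓ)} := by
  rw [descList, List.countP_reverse, ← Multiset.coe_countP, Multiset.sort_eq,
    Multiset.countP_map, ← Multiset.countP_eq_card_filter]
  simp [Finset.card, Finset.filter_val, Multiset.countP_eq_card_filter]

theorem kthLargest_of_lt {k : ℕ} (h : L < k) : kthLargest v k = 0 :=
  (kthLargest_eq_getD v k).trans (List.getD_eq_default _ _ (by rw [length_descList]; omega))

theorem kthLargest_eq_zero_or_mem_range (k : ℕ) :
    kthLargest v k = 0 ∨ kthLargest v k ∈ Set.range v := by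
  rw [kthLargest_eq_getD, List.getD_eq_getElem?_getD]
  cases h : (descList v)[k - 1]?
  · simp
  · exact Or.inr ((mem_descList v).1 (List.mem_of_getElem? h))

theorem descList_eq_take_append_cons {k : ℕ} (h0 : 0 < k) (hk : k ≤ L) :
    descList v = (descList v).take (k - 1) ++ kthLargest v k :: (descList v).drop k := by
  have hi : k - 1 < (descList v).length := by rw [length_descList]; omega
  conv_lhs => rw [← List.take_append_drop (k - 1) (descList v)]
  rw [List.drop_eq_getElem_cons hi, Nat.sub_add_cancel h0, kthLargest_eq_getD,
    List.getD_eq_getElem _ _ hi]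

theorem pairwise_take_append_kthLargest_cons {k : ℕ} (h0 : 0 < k) (hk : k ≤ L) :
    ((descList v).take (k - 1) ++ kthLargest v k :: (descList v).drop k).Pairwise (· ≥ ·) := by
  rw [← descList_eq_take_append_cons v h0 hk]
  exact pairwise_descList v

theorem card_kthLargest_lt_lt {k : ℕ} (h0 : 0 < k) : #{ℓ | kthLargest v k < v ℓ} < k := by
  by_cases hk : k ≤ L
  · rw [← countP_descList, descList_eq_take_append_cons v h0 hk]
    calc _ ≤ ((descList v).take (k - 1)).length :=
          List.countP_lt_le_of_pairwise_ge (pairwise_take_append_kthLargest_cons v h0 hk)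
      _ < k := by rw [List.length_take, length_descList]; omega
  · calc #{ℓ | kthLargest v k < v ℓ} ≤ #(univ : Finset (Fin L)) := card_filter_le _ _
      _ < k := by rw [card_univ, Fintype.card_fin]; omega

theorem le_card_kthLargest_le {k : ℕ} (h0 : 0 < k) (hk : k ≤ L) :
    k ≤ #{ℓ | kthLargest v k ≤ v ℓ} := by
  rw [← countP_descList, descList_eq_take_append_cons v h0 hk]
  calc k ≤ ((descList v).take (k - 1)).length + 1 := by
        rw [List.length_take, length_descList]; omega
    _ ≤ _ := List.length_lt_countP_le_of_pairwise_ge (pairwise_take_append_kthLargest_cons v h0 hk)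

theorem kthLargest_nonneg (hv : ∀ ℓ, 0 ≤ v ℓ) (k : ℕ) : 0 ≤ kthLargest v k := by
  obtain h | ⟨ℓ, h⟩ := kthLargest_eq_zero_or_mem_range v k
  · exact h.ge
  · exact h ▸ hv ℓ

theorem exists_kthLargest_le (hL : 0 < L) (hv : ∀ ℓ, 0 ≤ v ℓ) (k : ℕ) :
    ∃ ℓ, kthLargest v k ≤ v ℓ := by
  obtain h | ⟨ℓ, h⟩ := kthLargest_eq_zero_or_mem_range v k
  · exact ⟨⟨0, hL⟩, h ▸ hv _⟩
  · exact ⟨ℓ, h.ge⟩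

end KthLargest

section ErrorAtWidth

variable {ι : Type*} [Fintype ι]

noncomputable def errorAtWidth (c : ι → ℝ) (ε x : ℝ) : ℝ :=
  ∑ ℓ, max ((c ℓ - x) / 2) 0 + x / ε

theorem max_half_sub_le_add_ite {c T x : ℝ} (h : T ≤ x) :
    max ((c - T) / 2) 0 ≤ max ((c - x) / 2) 0 + if T < c then (x - T) / 2 else 0 := by
  split_ifs <;> simp only [max_def] <;> split_ifs <;> linarith

theorem max_half_sub_add_ite_le {c T x : ℝ} (h : x ≤ T) :
    max ((c - T) / 2) 0 + (if T ≤ c then (T - x) / 2 else 0) ≤ max ((c - x) / 2) 0 := by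
  split_ifs <;> simp only [max_def] <;> split_ifs <;> linarith

theorem isMinOn_errorAtWidth (c : ι → ℝ) {ε T : ℝ} (h_lt : (#{ℓ | T < c ℓ} : ℝ) ≤ 2 / ε)
    (h_le : 0 < T → 2 / ε ≤ #{ℓ | T ≤ c ℓ}) :
    IsMinOn (errorAtWidth c ε) (Set.Ici 0) T := by
  refine isMinOn_iff.2 fun x (hx : 0 ≤ x) => ?_
  simp only [errorAtWidth]
  rcases le_or_gt T x with hTx | hxT
  · have hsum : ∑ ℓ, max ((c ℓ - T) / 2) 0
        ≤ ∑ ℓ, max ((c ℓ - x) / 2) 0 + #{ℓ | T < c ℓ} * ((x - T) / 2) := by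
      rw [← nsmul_eq_mul, ← sum_const, sum_filter, ← sum_add_distrib]
      exact sum_le_sum fun ℓ _ => max_half_sub_le_add_ite hTx
    have hcard := mul_le_mul_of_nonneg_right h_lt (by linarith : 0 ≤ (x - T) / 2)
    have h2ε : 2 / ε * ((x - T) / 2) = x / ε - T / ε := by ring
    linarith
  · have hsum : ∑ ℓ, max ((c ℓ - T) / 2) 0 + #{ℓ | T ≤ c ℓ} * ((T - x) / 2)
        ≤ ∑ ℓ, max ((c ℓ - x) / 2) 0 := by
      rw [← nsmul_eq_mul, ← sum_const, sum_filter, ← sum_add_distrib]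
      exact sum_le_sum fun ℓ _ => max_half_sub_add_ite_le hxT.le
    have hcard :=
      mul_le_mul_of_nonneg_right (h_le (hx.trans_lt hxT)) (by linarith : 0 ≤ (T - x) / 2)
    have h2ε : 2 / ε * ((T - x) / 2) = T / ε - x / ε := by ring
    linarith

end ErrorAtWidth

theorem isMinOn_errorAtWidth_kthLargest {L : ℕ} (v : Fin L → ℝ) {ε : ℝ} (hε : 0 < ε) :
    IsMinOn (errorAtWidth v ε) (Set.Ici 0) (kthLargest v ⌈2 / ε⌉₊) := by
  have hk0 : 0 < ⌈2 / ε⌉₊ := Nat.ceil_pos.2 (by positivity)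
  refine isMinOn_errorAtWidth v ?_ fun hT => ?_
  · have hcard : (#{ℓ | kthLargest v ⌈2 / ε⌉₊ < v ℓ} : ℝ) + 1 ≤ ⌈2 / ε⌉₊ := by
      exact_mod_cast card_kthLargest_lt_lt v hk0
    linarith [Nat.ceil_lt_add_one (by positivity : (0 : ℝ) ≤ 2 / ε)]
  · have hkL : ⌈2 / ε⌉₊ ≤ L := le_of_not_gt fun h => hT.ne' (kthLargest_of_lt v h)
    exact (Nat.le_ceil _).trans (by exact_mod_cast le_card_kthLargest_le v hk0 hkL)

theorem max_half_sub_sum_le_sum_max {ι : Type*} [Fintype ι] (U : ℝ) {a b : ι → ℝ}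
    (ha : ∀ j, 0 ≤ a j) :
    max ((U * Fintype.card ι - ∑ j, (b j - a j)) / 2) 0 ≤ ∑ j, max (a j) (U - b j) := by
  refine max_le ?_ (sum_nonneg fun j _ => (ha j).trans (le_max_left _ _))
  calc (U * Fintype.card ι - ∑ j, (b j - a j)) / 2 = ∑ j, (a j + (U - b j)) / 2 := by
        rw [← sum_div, sum_add_distrib, sum_sub_distrib, sum_sub_distrib, sum_const, card_univ,
          nsmul_eq_mul]
        ring
    _ ≤ ∑ j, max (a j) (U - b j) :=
        sum_le_sum fun j _ => by
          linarith [le_max_left (a j) (U - b j), le_max_right (a j) (U - b j)]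

theorem half_sub_min_eq_max_half_sub (x T : ℝ) : (x - min x T) / 2 = max ((x - T) / 2) 0 := by
  rcases le_total x T with h | h
  · rw [min_eq_left h, max_eq_right (by linarith)]
    ring
  · rw [min_eq_right h, max_eq_left (by linarith)]

theorem sSup_range_min_eq {ι : Type*} {v : ι → ℝ} {T : ℝ} (h : ∃ ℓ, T ≤ v ℓ) :
    sSup (Set.range fun ℓ => min (v ℓ) T) = T := by
  obtain ⟨ℓ, hℓ⟩ := h
  refine IsGreatest.csSup_eq ⟨⟨ℓ, min_eq_right hℓ⟩, ?_⟩
  rintro _ ⟨ℓ', rfl⟩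
  exact min_le_right _ _

section Strategies

variable {L : ℕ} {m : Fin L → ℕ} {U ε : ℝ}

theorem sSup_width_nonneg (hL : 0 < L) {a b : (ℓ : Fin L) → Fin (m ℓ) → ℝ}
    (hab : Admissible m U a b) : 0 ≤ sSup (Set.range fun ℓ => ∑ j, (b ℓ j - a ℓ j)) :=
  (sum_nonneg fun j _ => sub_nonneg.2 (hab ⟨0, hL⟩ j).2.1).trans
    (le_csSup (Set.finite_range _).bddAbove ⟨⟨0, hL⟩, rfl⟩)

theorem errorAtWidth_le_E1 {a b : (ℓ : Fin L) → Fin (m ℓ) → ℝ} (hab : Admissible m U a b) :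
    (1 / ∑ ℓ, (m ℓ : ℝ)) * errorAtWidth (fun ℓ => U * m ℓ) ε
        (sSup (Set.range fun ℓ => ∑ j, (b ℓ j - a ℓ j))) ≤ E1 m U ε a b := by
  rw [E1, errorAtWidth, one_div_mul_eq_div _ (sSup _)]
  gcongr with ℓ
  calc max ((U * m ℓ - sSup (Set.range fun ℓ => ∑ j, (b ℓ j - a ℓ j))) / 2) 0
      ≤ max ((U * Fintype.card (Fin (m ℓ)) - ∑ j, (b ℓ j - a ℓ j)) / 2) 0 := by
        rw [Fintype.card_fin]
        gcongr
        exact le_csSup (Set.finite_range _).bddAbove ⟨ℓ, rfl⟩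
    _ ≤ ∑ j, max (a ℓ j) (U - b ℓ j) := max_half_sub_sum_le_sum_max U fun j => (hab ℓ j).1

theorem admissible_centered (hm : ∀ ℓ, 0 < m ℓ) {t : Fin L → ℝ} (ht0 : ∀ ℓ, 0 ≤ t ℓ)
    (htU : ∀ ℓ, t ℓ ≤ U * m ℓ) :
    Admissible m U (fun ℓ _ => (U - t ℓ / m ℓ) / 2) (fun ℓ _ => (U + t ℓ / m ℓ) / 2) := by
  intro ℓ _
  have hmℓ : (0 : ℝ) < m ℓ := by exact_mod_cast hm ℓ
  have hw0 : 0 ≤ t ℓ / m ℓ := div_nonneg (ht0 ℓ) hmℓ.le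
  have hwU : t ℓ / m ℓ ≤ U := (div_le_iff₀ hmℓ).2 (htU ℓ)
  exact ⟨by linarith, by linarith, by linarith⟩

theorem E1_centered (hm : ∀ ℓ, 0 < m ℓ) (t : Fin L → ℝ) :
    E1 m U ε (fun ℓ _ => (U - t ℓ / m ℓ) / 2) (fun ℓ _ => (U + t ℓ / m ℓ) / 2) =
      (1 / ∑ ℓ, (m ℓ : ℝ)) * (∑ ℓ, (U * m ℓ - t ℓ) / 2 + (1 / ε) * sSup (Set.range t)) := by
  have hclip : ∀ ℓ, ∑ _j : Fin (m ℓ), max ((U - t ℓ / m ℓ) / 2) (U - (U + t ℓ / m ℓ) / 2) =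
      (U * m ℓ - t ℓ) / 2 := fun ℓ => by
    have hmℓ : (m ℓ : ℝ) ≠ 0 := by exact_mod_cast (hm ℓ).ne'
    rw [show U - (U + t ℓ / m ℓ) / 2 = (U - t ℓ / m ℓ) / 2 by ring, max_self, sum_const,
      card_univ, Fintype.card_fin, nsmul_eq_mul]
    field_simp
  have hwidth : ∀ ℓ, ∑ _j : Fin (m ℓ), ((U + t ℓ / m ℓ) / 2 - (U - t ℓ / m ℓ) / 2) = t ℓ :=
    fun ℓ => by
    rw [show (U + t ℓ / m ℓ) / 2 - (U - t ℓ / m ℓ) / 2 = t ℓ / m ℓ by ring, sum_const,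
      card_univ, Fintype.card_fin, nsmul_eq_mul, mul_div_cancel₀ _ (by exact_mod_cast (hm ℓ).ne')]
  simp only [E1, hclip, hwidth]

end Strategies

/-- optimal worst-case error, `d = 1`.
The minimum of `E^(1)` over all admissible clipping strategies equals
`(1/M)·(∑_ℓ max{(U m_ℓ − T)/2, 0} + T/ε)`, where `T` is the `⌈2/ε⌉`-th largest value of
`{U·m_1, …, U·m_L}` (with `T = 0` if `⌈2/ε⌉ > L`). -/
theorem stmt2 {L : ℕ} (hL : 0 < L) (m : Fin L → ℕ) (hm : ∀ ℓ, 1 ≤ m ℓ)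
    (U ε : ℝ) (hU : 0 < U) (hε : 0 < ε)
    (T : ℝ) (hT : T = kthLargest (fun ℓ => U * (m ℓ : ℝ)) ⌈(2 : ℝ) / ε⌉₊) :
    IsLeast {e : ℝ | ∃ a b, Admissible m U a b ∧ e = E1 m U ε a b}
      ((1 / ∑ ℓ, (m ℓ : ℝ)) *
        ((∑ ℓ, max ((U * (m ℓ : ℝ) - T) / 2) 0) + T / ε)) := by
  have hc : ∀ ℓ, 0 ≤ U * (m ℓ : ℝ) := fun ℓ => by positivity
  have hT0 : 0 ≤ T := hT ▸ kthLargest_nonneg _ hc _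
  refine ⟨⟨_, _, admissible_centered hm (t := fun ℓ => min (U * m ℓ) T)
    (fun ℓ => le_min (hc ℓ) hT0) (fun ℓ => min_le_left _ _), ?_⟩, ?_⟩
  · rw [E1_centered hm, sSup_range_min_eq (hT ▸ exists_kthLargest_le _ hL hc _)]
    simp only [half_sub_min_eq_max_half_sub, one_div_mul_eq_div]
  · rintro e ⟨a, b, hab, rfl⟩
    have hmin := isMinOn_errorAtWidth_kthLargest (fun ℓ => U * (m ℓ : ℝ)) hε
    rw [← hT] at hmin
    exact (mul_le_mul_of_nonneg_left (hmin (sSup_width_nonneg hL hab)) (by positivity)).trans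
      (errorAtWidth_le_E1 hab)
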